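/- Let a clause state with bound n (relative to a CNF I and a trail τ) satisfy Inv1, Inv3, and Inv4. Let α and β be distinct active clauses of ranks a and b respectively, and let k ∈ ℕ with b < k ≤ n (so b ≤ n) be such that α min-k-subsumes β. Form a new state by: (i) if a > k, moving α from its group to D_k; (ii) moving β from D_b to S_k^b (deactivating and stashing β at level k with restoration level b). Then the new state satisfies Inv1, Inv2, Inv3, and Inv4. -/

import Mathlib

/-- A variable is a natural number. -/
abbrev Var := ℕ

/-- A literal is a pair of a variable and a Boolean polarity. -/
abbrev Lit := Var × Bool

/-- The negation of a literal flips its polarity. -/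
def Lit.neg (l : Lit) : Lit := (l.1, !l.2)

/-- A clause is a finite set of literals. -/
abbrev Clause := Finset Lit

/-- A total assignment. -/
abbrev Assignment := Var → Bool

/-- A trail is a finite list of (literal, decision level) pairs. -/
abbrev Trail := List (Lit × ℕ)

/-- An assignment satisfies a literal `(v, b)` iff it assigns `b` to `v`. -/
def SatLit (σ : Assignment) (l : Lit) : Prop := σ l.1 = l.2

/-- An assignment satisfies a clause iff it satisfies one of its literals. -/
def SatClause (σ : Assignment) (c : Clause) : Prop := ∃ l ∈ c, SatLit σ l

/-- An assignment satisfies a set of clauses iff it satisfies every clause in it. -/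
def SatSet (σ : Assignment) (Γ : Set Clause) : Prop := ∀ c ∈ Γ, SatClause σ c

/-- Entry `i` of trail `τ` is a decision: its level is positive and
no earlier entry has the same level. -/
def IsDecision (τ : Trail) (i : Fin τ.length) : Prop :=
  0 < (τ.get i).2 ∧ ∀ j : Fin τ.length, j < i → (τ.get j).2 ≠ (τ.get i).2

/-- `τ` is a trail for the input CNF `I`. -/
structure IsTrail (I : Finset Clause) (τ : Trail) : Prop where
  nodupVars : (τ.map (fun e => e.1.1)).Nodup
  levelsMono : (τ.map Prod.snd).Pairwise (· ≤ ·)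
  implied : ∀ i : Fin τ.length, ¬ IsDecision τ i →
    ∀ σ : Assignment, SatSet σ ↑I →
      (∀ j : Fin τ.length, j < i → IsDecision τ j → SatLit σ (τ.get j).1) →
      SatLit σ (τ.get i).1

/-- `τ^{≤d}`: the longest prefix of `τ` whose entries all have level `≤ d`. -/
def Trail.upTo (τ : Trail) (d : ℕ) : Trail := τ.takeWhile (fun e => e.2 ≤ d)

/-- An assignment satisfies (the literal of) every entry of a trail. -/
def SatTrail (σ : Assignment) (τ : Trail) : Prop := ∀ e ∈ τ, SatLit σ e.1

/-- `Γ →^d Δ` relative to `τ`. -/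
def ImpliesAt (τ : Trail) (d : ℕ) (Γ Δ : Set Clause) : Prop :=
  ∀ σ : Assignment, SatTrail σ (τ.upTo d) → SatSet σ Γ → SatSet σ Δ

/-- `Γ ↔^d Δ` relative to `τ`. -/
def EquivAt (τ : Trail) (d : ℕ) (Γ Δ : Set Clause) : Prop :=
  ImpliesAt τ d Γ Δ ∧ ImpliesAt τ d Δ Γ

/-- `α^{≤d}`: literals of `α` whose negation is not the literal of any entry of `τ^{≤d}`. -/
def Clause.upTo (τ : Trail) (d : ℕ) (α : Clause) : Clause :=
  α.filter (fun l => ∀ e ∈ τ.upTo d, e.1 ≠ Lit.neg l)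

/-- `α` d-subsumes `β` (relative to `τ`). -/
def SubsumesAt (τ : Trail) (d : ℕ) (α β : Clause) : Prop :=
  Clause.upTo τ d α ⊆ Clause.upTo τ d β

/-- `α` min-k-subsumes `β` (relative to `τ`). -/
def MinSubsumesAt (τ : Trail) (k : ℕ) (α β : Clause) : Prop :=
  SubsumesAt τ k α β ∧ ∀ d' < k, ¬ SubsumesAt τ d' α β

/-- `α` and `β` are resolvable on `x`. -/
def Resolvable (α β : Clause) (x : Var) : Prop := (x, true) ∈ α ∧ (x, false) ∈ β

/-- The resolveOn `α ⊗ₓ β`. -/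
def resolveOn (α β : Clause) (x : Var) : Clause := α.erase (x, true) ∪ β.erase (x, false)

/-- A clause state: groups `Dᵢ` (meaningful for `i ≤ n`), temporary clauses `D∞`,
and stashed groups `Sᵢ^q` (meaningful for `q < i ≤ n`). -/
structure ClauseState where
  D : ℕ → Set Clause
  Dinf : Set Clause
  Stash : ℕ → ℕ → Set Clause

/-- `Sᵢ := ⋃_{q<i} Sᵢ^q`. -/
def ClauseState.Sl (st : ClauseState) (i : ℕ) : Set Clause :=
  {α | ∃ q < i, α ∈ st.Stash i q}

/-- `S := ⋃_{1≤i≤n} Sᵢ`. -/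
def ClauseState.Sall (st : ClauseState) (n : ℕ) : Set Clause :=
  {α | ∃ i, 1 ≤ i ∧ i ≤ n ∧ α ∈ st.Sl i}

/-- `S⁰ := ⋃_{0<i≤n} Sᵢ^0`. -/
def ClauseState.S0 (st : ClauseState) (n : ℕ) : Set Clause :=
  {α | ∃ i, 0 < i ∧ i ≤ n ∧ α ∈ st.Stash i 0}

/-- The pervasive clauses `P := D₀ ∪ S⁰`. -/
def ClauseState.P (st : ClauseState) (n : ℕ) : Set Clause := st.D 0 ∪ st.S0 n

/-- The active-non-temporary clauses `N := ⋃_{0≤i≤n} Dᵢ`. -/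
def ClauseState.N (st : ClauseState) (n : ℕ) : Set Clause := {α | ∃ i ≤ n, α ∈ st.D i}

/-- The active clauses `A := N ∪ D∞`. -/
def ClauseState.A (st : ClauseState) (n : ℕ) : Set Clause := st.N n ∪ st.Dinf

/-- Inv1 (input-equivalence): `I ↔⁰ P`. -/
def Inv1 (I : Finset Clause) (τ : Trail) (st : ClauseState) (n : ℕ) : Prop :=
  EquivAt τ 0 ↑I (st.P n)

/-- Inv2 (correctness): `N ↔ⁿ P`. -/
def Inv2 (τ : Trail) (st : ClauseState) (n : ℕ) : Prop :=
  EquivAt τ n (st.N n) (st.P n)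

/-- The representation condition on a clause `α` stashed at level `i`. -/
def Represented (τ : Trail) (st : ClauseState) (n i : ℕ) (α : Clause) : Prop :=
  (∃ r ≤ i, ∃ β ∈ st.D r, ImpliesAt τ i {β} {α}) ∨
  (∃ r ≤ i, ∃ j, i < j ∧ j ≤ n ∧ ∃ β ∈ st.Stash j r, ImpliesAt τ i {β} {α}) ∨
  ImpliesAt τ i ∅ {α}

/-- Inv3 (representation). -/
def Inv3 (τ : Trail) (st : ClauseState) (n : ℕ) : Prop :=
  ∀ i, 1 ≤ i → i ≤ n → ∀ α ∈ st.Sl i, Represented τ st n i α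

/-- Inv4 (closure): every active or stashed clause is 0-implied by `P`. -/
def Inv4 (τ : Trail) (st : ClauseState) (n : ℕ) : Prop :=
  ∀ γ ∈ st.A n ∪ st.Sall n, ImpliesAt τ 0 (st.P n) {γ}

/-- All four BI invariants. -/
def Invs (I : Finset Clause) (τ : Trail) (st : ClauseState) (n : ℕ) : Prop :=
  Inv1 I τ st n ∧ Inv2 τ st n ∧ Inv3 τ st n ∧ Inv4 τ st n

section Helpers

lemma mem_takeWhile_mono {γ : Type*} (p q : γ → Bool) (h : ∀ x, p x = true → q x = true) :
    ∀ l : List γ, ∀ x ∈ l.takeWhile p, x ∈ l.takeWhile q := by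
  intro l
  induction l with
  | nil => simp
  | cons a t ih =>
    intro x hx
    by_cases hp : p a
    · rw [List.takeWhile_cons_of_pos hp] at hx
      rw [List.takeWhile_cons_of_pos (h a hp)]
      rcases List.mem_cons.1 hx with h' | h'
      · exact h' ▸ List.mem_cons_self
      · exact List.mem_cons_of_mem _ (ih x h')
    · rw [List.takeWhile_cons_of_neg hp] at hx
      simp at hx

lemma satTrail_mono {σ : Assignment} {τ : Trail} {d d' : ℕ} (h : d ≤ d')
    (hs : SatTrail σ (τ.upTo d')) : SatTrail σ (τ.upTo d) := by
  intro e he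
  refine hs e (mem_takeWhile_mono _ _ (fun x hx => ?_) τ e he)
  simp only [decide_eq_true_eq] at hx ⊢
  omega

lemma impliesAt_mono {τ : Trail} {d d' : ℕ} {Γ Δ : Set Clause} (h : d ≤ d')
    (him : ImpliesAt τ d Γ Δ) : ImpliesAt τ d' Γ Δ :=
  fun σ hσ hΓ => him σ (satTrail_mono h hσ) hΓ

lemma impliesAt_trans {τ : Trail} {d : ℕ} {Γ Δ E : Set Clause}
    (h1 : ImpliesAt τ d Γ Δ) (h2 : ImpliesAt τ d Δ E) : ImpliesAt τ d Γ E :=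
  fun σ hσ hΓ => h2 σ hσ (h1 σ hσ hΓ)

lemma impliesAt_of_mem {τ : Trail} {d : ℕ} {Γ : Set Clause} {δ γ : Clause} (hδ : δ ∈ Γ)
    (h : ImpliesAt τ d {δ} {γ}) : ImpliesAt τ d Γ {γ} :=
  fun σ hσ hΓ => h σ hσ (fun c hc => by rw [Set.mem_singleton_iff] at hc; exact hc ▸ hΓ δ hδ)

lemma impliesAt_of_empty {τ : Trail} {d : ℕ} {Γ Δ : Set Clause}
    (h : ImpliesAt τ d ∅ Δ) : ImpliesAt τ d Γ Δ :=
  fun σ hσ _ => h σ hσ (fun c hc => absurd hc (Set.notMem_empty c))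

lemma subsumes_implies {τ : Trail} {k : ℕ} {α β : Clause} (h : SubsumesAt τ k α β) :
    ImpliesAt τ k {α} {β} := by
  intro σ hτ hΓ c hc
  rw [Set.mem_singleton_iff] at hc
  subst hc
  obtain ⟨l, hl, hsl⟩ := hΓ α rfl
  by_cases hl' : l ∈ Clause.upTo τ k α
  · exact ⟨l, Finset.mem_filter.1 (h hl') |>.1, hsl⟩
  · exfalso
    rw [Clause.upTo, Finset.mem_filter] at hl'
    push_neg at hl'
    obtain ⟨e, he, hne⟩ := hl' hl
    have hte := hτ e he
    rw [hne] at hte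
    simp only [SatLit, Lit.neg] at hte hsl
    rw [hsl] at hte
    exact (Bool.not_ne_self l.2).symm hte

end Helpers

/-- the `b < k` case of `Inprocess`: if `α` min-k-subsumes `β`,
`β ∈ D_b` with `b < k ≤ n`, then promoting `α` to `D_k` when its rank `a > k`
(`a = ∞` for temporary `α`) and stashing `β` in `S_k^b` preserves all BI invariants. -/
theorem stmt6 (I : Finset Clause) (τ : Trail) (hτ : IsTrail I τ)
    (st : ClauseState) (n : ℕ)
    (h1 : Inv1 I τ st n) (h3 : Inv3 τ st n) (h4 : Inv4 τ st n)
    (α β : Clause) (hαβ : α ≠ β)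
    (b k : ℕ) (hβ : β ∈ st.D b) (hbk : b < k) (hkn : k ≤ n)
    (hsub : MinSubsumesAt τ k α β)
    (st' : ClauseState)
    (hS : st'.Stash = fun i q =>
      if i = k ∧ q = b then st.Stash k b ∪ {β} else st.Stash i q)
    (hcase :
      -- α is temporary (rank ∞ > k): move α to D_k and stash β
      (α ∈ st.Dinf ∧ st'.Dinf = st.Dinf \ {α} ∧
        st'.D = fun q => if q = k then st.D k ∪ {α}
                 else if q = b then st.D b \ {β} else st.D q)
      ∨ -- α ∈ D_a with a ≤ n
      (∃ a, a ≤ n ∧ α ∈ st.D a ∧ st'.Dinf = st.Dinf ∧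
          ((k < a ∧
            st'.D = fun q => if q = k then st.D k ∪ {α}
                     else if q = a then st.D a \ {α}
                     else if q = b then st.D b \ {β} else st.D q)
           ∨ (a ≤ k ∧
            st'.D = fun q => if q = b then st.D b \ {β} else st.D q)))) :
    Invs I τ st' n := by
  have hbn : b ≤ n := le_of_lt (lt_of_lt_of_le hbk hkn)
  have hk0 : 0 < k := Nat.pos_of_ne_zero (by omega)
  -- α is active in the old state
  have hαA : α ∈ st.A n := by
    rcases hcase with ⟨hA, _, _⟩ | ⟨a, han, hαa, _, _⟩
    · exact Or.inr hA
    · exact Or.inl ⟨a, han, hαa⟩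
  have hDinf' : st'.Dinf ⊆ st.Dinf := by
    rcases hcase with ⟨_, hDi, _⟩ | ⟨a, _, _, hDi, _⟩
    · rw [hDi]; exact Set.diff_subset
    · rw [hDi]
  -- α lands in st'.D c for some c ≤ k
  have hF1 : ∃ c ≤ k, α ∈ st'.D c := by
    rcases hcase with ⟨hA, hDi, hD⟩ | ⟨a, han, hαa, hDi, hc⟩
    · exact ⟨k, le_refl k, by rw [hD]; simp⟩
    · rcases hc with ⟨hka, hD⟩ | ⟨hak, hD⟩
      · exact ⟨k, le_refl k, by rw [hD]; simp⟩
      · refine ⟨a, hak, ?_⟩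
        rw [hD]
        by_cases hab : a = b
        · subst hab
          simp only [if_pos rfl]
          exact ⟨hαa, by simpa using hαβ⟩
        · simp only [if_neg hab]
          exact hαa
  -- membership transfer from old D to new D
  have hF2 : ∀ γ r, γ ∈ st.D r →
      γ ∈ st'.D r ∨ (γ = α ∧ k < r ∧ α ∈ st'.D k) ∨ (γ = β ∧ r = b) := by
    intro γ r hγ
    rcases hcase with ⟨hA, hDi, hD⟩ | ⟨a, han, hαa, hDi, hc⟩
    · rw [hD]
      by_cases hrk : r = k
      · subst hrk; left; simp only [if_pos rfl]; exact Or.inl hγ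
      · by_cases hrb : r = b
        · subst hrb
          by_cases hγβ : γ = β
          · exact Or.inr (Or.inr ⟨hγβ, rfl⟩)
          · left; simp only [if_neg hrk, if_pos rfl]; exact ⟨hγ, hγβ⟩
        · left; simp only [if_neg hrk, if_neg hrb]; exact hγ
    · rcases hc with ⟨hka, hD⟩ | ⟨hak, hD⟩
      · rw [hD]
        by_cases hrk : r = k
        · subst hrk; left; simp only [if_pos rfl]; exact Or.inl hγ
        · by_cases hra : r = a
          · subst hra
            by_cases hγα : γ = α
            · exact Or.inr (Or.inl ⟨hγα, hka, by simp only [if_pos rfl]; exact Or.inr rfl⟩)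
            · left; simp only [if_neg hrk, if_pos rfl]; exact ⟨hγ, hγα⟩
          · by_cases hrb : r = b
            · subst hrb
              by_cases hγβ : γ = β
              · exact Or.inr (Or.inr ⟨hγβ, rfl⟩)
              · left; simp only [if_neg hrk, if_neg hra, if_pos rfl]; exact ⟨hγ, hγβ⟩
            · left; simp only [if_neg hrk, if_neg hra, if_neg hrb]; exact hγ
      · rw [hD]
        by_cases hrb : r = b
        · subst hrb
          by_cases hγβ : γ = β
          · exact Or.inr (Or.inr ⟨hγβ, rfl⟩)
          · left; simp only [if_pos rfl]; exact ⟨hγ, hγβ⟩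
        · left; simp only [if_neg hrb]; exact hγ
  -- membership transfer from new D to old state
  have hF4 : ∀ γ r, γ ∈ st'.D r → γ ∈ st.D r ∨ (γ = α ∧ r = k) := by
    intro γ r hγ
    rcases hcase with ⟨hA, hDi, hD⟩ | ⟨a, han, hαa, hDi, hc⟩
    · rw [hD] at hγ
      by_cases hrk : r = k
      · subst hrk; simp only [if_pos rfl] at hγ
        rcases hγ with hγ | hγ
        · exact Or.inl hγ
        · exact Or.inr ⟨hγ, rfl⟩
      · by_cases hrb : r = b
        · subst hrb; simp only [if_neg hrk, if_pos rfl] at hγ; exact Or.inl hγ.1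
        · simp only [if_neg hrk, if_neg hrb] at hγ; exact Or.inl hγ
    · rcases hc with ⟨hka, hD⟩ | ⟨hak, hD⟩
      · rw [hD] at hγ
        by_cases hrk : r = k
        · subst hrk; simp only [if_pos rfl] at hγ
          rcases hγ with hγ | hγ
          · exact Or.inl hγ
          · exact Or.inr ⟨hγ, rfl⟩
        · by_cases hra : r = a
          · subst hra; simp only [if_neg hrk, if_pos rfl] at hγ; exact Or.inl hγ.1
          · by_cases hrb : r = b
            · subst hrb; simp only [if_neg hrk, if_neg hra, if_pos rfl] at hγ
              exact Or.inl hγ.1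
            · simp only [if_neg hrk, if_neg hra, if_neg hrb] at hγ; exact Or.inl hγ
      · rw [hD] at hγ
        by_cases hrb : r = b
        · subst hrb; simp only [if_pos rfl] at hγ; exact Or.inl hγ.1
        · simp only [if_neg hrb] at hγ; exact Or.inl hγ
  -- stash facts
  have hSt1 : ∀ i q, st.Stash i q ⊆ st'.Stash i q := by
    intro i q γ hγ
    rw [hS]
    dsimp only
    split_ifs with h
    · obtain ⟨rfl, rfl⟩ := h; exact Or.inl hγ
    · exact hγ
  have hSt2 : ∀ i q γ, γ ∈ st'.Stash i q → γ ∈ st.Stash i q ∨ (γ = β ∧ i = k ∧ q = b) := by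
    intro i q γ hγ
    rw [hS] at hγ
    dsimp only at hγ
    split_ifs at hγ with h
    · obtain ⟨rfl, rfl⟩ := h
      rcases hγ with hγ | hγ
      · exact Or.inl hγ
      · exact Or.inr ⟨hγ, rfl, rfl⟩
    · exact Or.inl hγ
  have hβk : β ∈ st'.Stash k b := by
    rw [hS]; simp
  -- pervasive clauses unchanged
  have hP : st'.P n = st.P n := by
    ext γ
    constructor
    · rintro (hγ | ⟨i, hi0, hin, hγ⟩)
      · rcases hF4 γ 0 hγ with h | ⟨_, h⟩
        · exact Or.inl h
        · omega
      · rcases hSt2 i 0 γ hγ with h | ⟨heq, _, hb0⟩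
        · exact Or.inr ⟨i, hi0, hin, h⟩
        · rw [heq]; exact Or.inl (show β ∈ st.D 0 by rw [hb0]; exact hβ)
    · rintro (hγ | ⟨i, hi0, hin, hγ⟩)
      · rcases hF2 γ 0 hγ with h | ⟨_, hk, _⟩ | ⟨heqβ, hb0⟩
        · exact Or.inl h
        · omega
        · rw [heqβ]; exact Or.inr ⟨k, hk0, hkn, hb0 ▸ hβk⟩
      · exact Or.inr ⟨i, hi0, hin, hSt1 i 0 hγ⟩
  -- α k-implies β
  have hαβimp : ImpliesAt τ k {α} {β} := subsumes_implies hsub.1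
  -- Inv3 for the new state
  have hInv3' : Inv3 τ st' n := by
    intro i h1i hin γ hγ
    obtain ⟨q, hq, hm⟩ := hγ
    rcases hSt2 i q γ hm with hm' | ⟨heqγ, heqi, heqq⟩
    · have hrep := h3 i h1i hin γ ⟨q, hq, hm'⟩
      rcases hrep with ⟨r, hri, δ, hδ, himp⟩ | ⟨r, hri, j, hij, hjn, δ, hδ, himp⟩ | hs
      · rcases hF2 δ r hδ with hδ' | ⟨heq, hkr, hαk⟩ | ⟨heq, heq2⟩
        · exact Or.inl ⟨r, hri, δ, hδ', himp⟩
        · rw [heq] at himp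
          exact Or.inl ⟨k, le_trans (le_of_lt hkr) hri, α, hαk, himp⟩
        · rw [heq] at himp
          rw [heq2] at hri
          by_cases hik : i < k
          · exact Or.inr (Or.inl ⟨b, hri, k, hik, hkn, β, hβk, himp⟩)
          · push_neg at hik
            obtain ⟨c, hck, hαc⟩ := hF1
            exact Or.inl ⟨c, le_trans hck hik, α, hαc,
              impliesAt_trans (impliesAt_mono hik hαβimp) himp⟩
      · exact Or.inr (Or.inl ⟨r, hri, j, hij, hjn, δ, hSt1 j r hδ, himp⟩)
      · exact Or.inr (Or.inr hs)
    · obtain ⟨c, hck, hαc⟩ := hF1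
      subst heqγ heqi
      exact Or.inl ⟨c, hck, α, hαc, hαβimp⟩
  -- Inv4 for the new state
  have hInv4' : Inv4 τ st' n := by
    intro γ hγ
    rw [hP]
    apply h4
    rcases hγ with (⟨i, hi, hd⟩ | hT) | ⟨i, h1i, hin, q, hq, hm⟩
    · rcases hF4 γ i hd with h | ⟨heq, _⟩
      · exact Or.inl (Or.inl ⟨i, hi, h⟩)
      · exact heq ▸ Or.inl hαA
    · exact Or.inl (Or.inr (hDinf' hT))
    · rcases hSt2 i q γ hm with h | ⟨heq, _, _⟩
      · exact Or.inr ⟨i, h1i, hin, q, hq, h⟩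
      · exact heq ▸ Or.inl (Or.inl ⟨b, hbn, hβ⟩)
  -- every new stashed clause is n-implied by the new N
  have key : ∀ m i, 1 ≤ i → i ≤ n → n - i ≤ m → ∀ γ ∈ st'.Sl i,
      ImpliesAt τ n (st'.N n) {γ} := by
    intro m
    induction m with
    | zero =>
      intro i h1i hin hni γ hγ
      rcases hInv3' i h1i hin γ hγ with ⟨r, hri, δ, hδ, himp⟩ |
        ⟨r, hri, j, hij, hjn, δ, hδ, himp⟩ | hs
      · exact impliesAt_of_mem ⟨r, le_trans hri hin, hδ⟩ (impliesAt_mono hin himp)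
      · omega
      · exact impliesAt_of_empty (impliesAt_mono hin hs)
    | succ m ih =>
      intro i h1i hin hni γ hγ
      rcases hInv3' i h1i hin γ hγ with ⟨r, hri, δ, hδ, himp⟩ |
        ⟨r, hri, j, hij, hjn, δ, hδ, himp⟩ | hs
      · exact impliesAt_of_mem ⟨r, le_trans hri hin, hδ⟩ (impliesAt_mono hin himp)
      · have hδSl : δ ∈ st'.Sl j := ⟨r, lt_of_le_of_lt hri hij, hδ⟩
        have hNδ := ih j (by omega) hjn (by omega) δ hδSl
        exact impliesAt_trans hNδ (impliesAt_mono hin himp)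
      · exact impliesAt_of_empty (impliesAt_mono hin hs)
  -- Inv2 for the new state
  have hInv2' : Inv2 τ st' n := by
    constructor
    · intro σ hσ hN γ hγ
      rcases hγ with hγ | ⟨i, hi0, hin, hγ⟩
      · exact hN γ ⟨0, Nat.zero_le n, hγ⟩
      · have := key n i hi0 hin (by omega) γ ⟨0, hi0, hγ⟩
        exact this σ hσ hN γ rfl
    · intro σ hσ hPs γ hγ
      exact impliesAt_mono (Nat.zero_le n)
        (hInv4' γ (Or.inl (Or.inl hγ))) σ hσ hPs γ rfl
  refine ⟨?_, hInv2', hInv3', hInv4'⟩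
  unfold Inv1
  rw [hP]
  exact h1
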